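/- arXiv:0911.0440 — 5 statements merged into one kernel-verified Lean document; each statement's English description precedes it below -/
import Mathlib

section
/- Let A be an open convex subset of a finite-dimensional real inner product space V, and let f : A → ℝ be strictly convex with a minimum point x̄ ∈ A. Then for every ε > 0 there exists δ > 0 such that for every p ∈ V with ‖p‖ < δ, the function f_p(x) := f(x) − ⟨p, x⟩ admits a unique minimum point x̄_p on A, and ‖x̄_p − x̄‖ < ε. -/
/-!
Choose a closed ball of radius `r < ε` around `x̄` inside `A`. By strict convexity `x̄` is the unique
minimum of `f`, so compactness of the sphere gives a level `a > f x̄` with `a ≤ f` on the sphere.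
For `‖p‖ < (a - f x̄) / r` the tilt `⟪p, ·⟫` moves values on the sphere by less than `a - f x̄`
relative to the centre, so `f_p` still exceeds `f_p x̄` there. Its minimum over the closed ball is
then attained inside the open ball, hence is a local and, by convexity, a global minimum on `A`;
strict convexity makes it unique.
-/

open scoped RealInnerProductSpace
open Metric Set

theorem StrictConvexOn.lt_of_isMinOn {𝕜 E β : Type*} [Field 𝕜] [LinearOrder 𝕜]
    [IsStrictOrderedRing 𝕜] [AddCommMonoid E] [SMul 𝕜 E] [AddCommMonoid β] [PartialOrder β]
    [IsOrderedAddMonoid β] [Module 𝕜 β] [PosSMulMono 𝕜 β] {s : Set E} {f : E → β} {a x : E}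
    (hf : StrictConvexOn 𝕜 s f) (hmin : IsMinOn f s a) (ha : a ∈ s) (hx : x ∈ s) (hne : x ≠ a) :
    f a < f x :=
  (hmin hx).lt_of_ne fun heq => hne <|
    hf.eq_of_isMinOn (fun _ hy => heq ▸ hmin hy) hmin hx ha

theorem ConvexOn.exists_isMinOn_mem_ball_of_lt_on_sphere {E : Type*} [NormedAddCommGroup E]
    [NormedSpace ℝ E] [ProperSpace E] {s : Set E} {g : E → ℝ} {c : E} {r : ℝ}
    (hg : ConvexOn ℝ s g) (hcont : ContinuousOn g (closedBall c r)) (hr : 0 ≤ r)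
    (hrs : closedBall c r ⊆ s) (hsphere : ∀ x ∈ sphere c r, g c < g x) :
    ∃ x ∈ ball c r, IsMinOn g s x := by
  obtain ⟨x, hx, hmin⟩ :=
    (isCompact_closedBall c r).exists_isMinOn ⟨c, mem_closedBall_self hr⟩ hcont
  have hx_ball : x ∈ ball c r := by
    rcases (mem_closedBall.1 hx).lt_or_eq with hlt | heq
    · exact hlt
    · exact absurd (hmin (mem_closedBall_self hr)) (hsphere x heq).not_ge
  have hlocal : IsLocalMin g x :=
    hmin.isLocalMin (Filter.mem_of_superset (isOpen_ball.mem_nhds hx_ball) ball_subset_closedBall)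
  exact ⟨x, hx_ball, .of_isLocalMinOn_of_convexOn (hrs hx) (hlocal.on s) hg⟩

theorem inner_sub_inner_lt_of_mem_sphere {V : Type*} [NormedAddCommGroup V]
    [InnerProductSpace ℝ V] {p x c : V} {r m : ℝ} (hr : 0 < r) (hx : x ∈ sphere c r)
    (hp : ‖p‖ < m / r) : ⟪p, x⟫ - ⟪p, c⟫ < m :=
  calc ⟪p, x⟫ - ⟪p, c⟫ = ⟪p, x - c⟫ := (inner_sub_right p x c).symm
    _ ≤ ‖p‖ * ‖x - c‖ := real_inner_le_norm p _
    _ = ‖p‖ * r := by rw [← dist_eq_norm, mem_sphere.1 hx]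
    _ < m := (lt_div_iff₀ hr).1 hp

theorem stmt_0 {V : Type*} [NormedAddCommGroup V] [InnerProductSpace ℝ V]
    [FiniteDimensional ℝ V] {A : Set V} (hA : IsOpen A) (hAconv : Convex ℝ A)
    {f : V → ℝ} (hf : StrictConvexOn ℝ A f)
    {xbar : V} (hxbar : xbar ∈ A) (hmin : ∀ x ∈ A, f xbar ≤ f x) :
    ∀ ε > 0, ∃ δ > 0, ∀ p : V, ‖p‖ < δ →
      ∃ xp, (xp ∈ A ∧ (∀ x ∈ A, f xp - ⟪p, xp⟫ ≤ f x - ⟪p, x⟫) ∧ ‖xp - xbar‖ < ε) ∧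
        ∀ y, y ∈ A → (∀ x ∈ A, f y - ⟪p, y⟫ ≤ f x - ⟪p, x⟫) → y = xp := by
  intro ε hε
  obtain ⟨r₀, hr₀, hr₀A⟩ := nhds_basis_closedBall.mem_iff.1 (hA.mem_nhds hxbar)
  set r := min r₀ (ε / 2)
  have hr : 0 < r := lt_min hr₀ (half_pos hε)
  have hball : closedBall xbar r ⊆ A := (closedBall_subset_closedBall (min_le_left _ _)).trans hr₀A
  have hcont : ContinuousOn f A := hf.convexOn.continuousOn hA
  obtain ⟨a, hfa, ha⟩ := (isCompact_sphere xbar r).exists_forall_le'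
    (hcont.mono (sphere_subset_closedBall.trans hball)) fun x hx =>
      hf.lt_of_isMinOn hmin hxbar (hball (sphere_subset_closedBall hx))
        (ne_of_mem_sphere hx hr.ne')
  refine ⟨(a - f xbar) / r, div_pos (sub_pos.2 hfa) hr, fun p hp => ?_⟩
  set g : V → ℝ := fun x => f x - ⟪p, x⟫
  have hg : StrictConvexOn ℝ A g := hf.sub_concaveOn ((innerₛₗ ℝ p).concaveOn hAconv)
  have hgcont : ContinuousOn g A := hcont.sub (continuous_const.inner continuous_id).continuousOn
  have hsphere : ∀ x ∈ sphere xbar r, g xbar < g x := fun x hx => by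
    have := inner_sub_inner_lt_of_mem_sphere hr hx hp
    simp only [g]
    linarith [ha x hx]
  obtain ⟨xp, hxp, hxp_min⟩ := hg.convexOn.exists_isMinOn_mem_ball_of_lt_on_sphere
    (hgcont.mono hball) hr.le hball hsphere
  have hxpA : xp ∈ A := hball (ball_subset_closedBall hxp)
  refine ⟨xp, ⟨hxpA, hxp_min, ?_⟩, fun y hy hy_min => hg.eq_of_isMinOn hy_min hxp_min hy hxpA⟩
  calc ‖xp - xbar‖ < r := mem_ball_iff_norm.1 hxp
    _ ≤ ε / 2 := min_le_right _ _
    _ < ε := half_lt_self hε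
end

section
/- Let f : A → ℝ be strictly convex on an open convex subset A of a finite-dimensional normed space, let x̄ ∈ A, and suppose ε > 0 is such that the closed ball of radius ε around x̄ is contained in A and f(x) > f(x̄) for all x on the sphere S(x̄, ε). Then f attains a minimum on the closed ball B̄(x̄, ε) at a point lying in the open ball, and this point is the unique global minimum of f over all of A. -/
/-!
Minimise `f` over the compact ball `closedBall xbar ε`. The minimum is at most `f xbar`, which is
below every value on the sphere, so it is attained in the open ball. There it is a local minimum
of `f` on `A`, hence a global one by convexity, and strict convexity makes it unique.
-/

open Metric

theorem exists_mem_ball_isMinOn_closedBall {X β : Type*} [PseudoMetricSpace X] [ProperSpace X]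
    [LinearOrder β] [TopologicalSpace β] [ClosedIicTopology β] {f : X → β} {c : X} {r : ℝ}
    (hr : 0 ≤ r) (hf : ContinuousOn f (closedBall c r))
    (hsphere : ∀ x ∈ sphere c r, f c < f x) :
    ∃ x₀ ∈ ball c r, IsMinOn f (closedBall c r) x₀ := by
  obtain ⟨x₀, hx₀, hmin⟩ :=
    (isCompact_closedBall c r).exists_isMinOn ⟨c, mem_closedBall_self hr⟩ hf
  refine ⟨x₀, ?_, hmin⟩
  rcases (mem_closedBall.mp hx₀).lt_or_eq with hlt | heq
  · exact mem_ball.mpr hlt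
  · exact absurd (hmin (mem_closedBall_self hr)) (hsphere x₀ (mem_sphere.mpr heq)).not_ge

theorem stmt_2_general {V : Type*} [NormedAddCommGroup V] [NormedSpace ℝ V]
    [FiniteDimensional ℝ V] {A : Set V}
    {f : V → ℝ} (hf : StrictConvexOn ℝ A f) (hfc : ContinuousOn f A)
    {xbar : V} {ε : ℝ} (hε : 0 < ε)
    (hball : Metric.closedBall xbar ε ⊆ A)
    (hsphere : ∀ x ∈ Metric.sphere xbar ε, f xbar < f x) :
    ∃ x₀ ∈ Metric.ball xbar ε,
      (∀ x ∈ Metric.closedBall xbar ε, f x₀ ≤ f x) ∧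
      (∀ x ∈ A, f x₀ ≤ f x) ∧
      ∀ y ∈ A, (∀ x ∈ A, f y ≤ f x) → y = x₀ := by
  obtain ⟨x₀, hx₀, hmin⟩ :=
    exists_mem_ball_isMinOn_closedBall hε.le (hfc.mono hball) hsphere
  have hx₀A : x₀ ∈ A := hball (ball_subset_closedBall hx₀)
  have hlocal : IsLocalMin f x₀ := hmin.isLocalMin (closedBall_mem_nhds_of_mem hx₀)
  have hglobal : IsMinOn f A x₀ :=
    .of_isLocalMinOn_of_convexOn hx₀A (hlocal.on A) hf.convexOn
  exact ⟨x₀, hx₀, hmin, hglobal, fun y hy hymin => hf.eq_of_isMinOn hymin hglobal hy hx₀A⟩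

theorem stmt_2 {V : Type*} [NormedAddCommGroup V] [NormedSpace ℝ V]
    [FiniteDimensional ℝ V] {A : Set V} (hA : IsOpen A) (hAconv : Convex ℝ A)
    {f : V → ℝ} (hf : StrictConvexOn ℝ A f) (hfc : ContinuousOn f A)
    {xbar : V} (hxbar : xbar ∈ A) {ε : ℝ} (hε : 0 < ε)
    (hball : Metric.closedBall xbar ε ⊆ A)
    (hsphere : ∀ x ∈ Metric.sphere xbar ε, f xbar < f x) :
    ∃ x₀ ∈ Metric.ball xbar ε,
      (∀ x ∈ Metric.closedBall xbar ε, f x₀ ≤ f x) ∧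
      (∀ x ∈ A, f x₀ ≤ f x) ∧
      ∀ y ∈ A, (∀ x ∈ A, f y ≤ f x) → y = x₀ :=
  stmt_2_general hf hfc hε hball hsphere
end

section
/- Let V, W be finite-dimensional real inner product spaces, A ⊆ V open convex, and J : A × W → ℝ given by J(x, σ) = f(x) + ⟨x, L(σ)⟩ where f : A → ℝ is strictly convex and L : W → V is linear. Suppose for every σ ∈ W the function x ↦ J(x, σ) has a (necessarily unique) minimum point Λ(σ). Then the map σ ↦ Λ(σ) is continuous. -/
/-!
Fix `σ₀` and a small sphere around `x₀ = Λ σ₀` inside `A`. By strict convexity `x₀` is the unique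
minimiser of `J(·, σ₀)`, so `J(·, σ₀)` is strictly larger on the (compact) sphere than at `x₀`; by
joint continuity this strict inequality survives for `σ` near `σ₀`. Convexity of `J(·, σ)` then
traps its minimiser `Λ σ` inside the sphere: otherwise the segment from `x₀` to `Λ σ` would cross
the sphere at a point where `J(·, σ)` exceeds both endpoint values.
-/

open scoped RealInnerProductSpace

open Set Filter Topology Metric

lemma StrictConvexOn.lt_of_isMinOn_s4 {E : Type*} [AddCommGroup E] [Module ℝ E] {s : Set E}
    {f : E → ℝ} (hf : StrictConvexOn ℝ s f) {x y : E} (hfx : IsMinOn f s x) (hx : x ∈ s)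
    (hy : y ∈ s) (hyx : y ≠ x) : f x < f y := by
  refine (hfx hy).lt_of_ne fun hxy ↦ hyx ?_
  exact hf.eq_of_isMinOn (fun z hz ↦ hxy ▸ hfx hz) hfx hy hx

lemma ConvexOn.dist_lt_of_lt_on_sphere {E : Type*} [NormedAddCommGroup E] [NormedSpace ℝ E]
    {s : Set E} {f : E → ℝ} (hf : ConvexOn ℝ s f) {x₀ x : E} {r : ℝ} (hr : 0 < r)
    (hx₀ : x₀ ∈ s) (hx : x ∈ s) (hsphere : ∀ y ∈ sphere x₀ r, f x₀ < f y)
    (hfx : f x ≤ f x₀) : dist x x₀ < r := by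
  by_contra! hrx
  have hd : 0 < dist x₀ x := by rw [dist_comm]; linarith
  set y := AffineMap.lineMap x₀ x (r / dist x₀ x)
  have hy_seg : y ∈ segment ℝ x₀ x :=
    lineMap_mem_segment ℝ x₀ x ⟨by positivity, div_le_one_of_le₀ (by rwa [dist_comm]) hd.le⟩
  have hy_sphere : y ∈ sphere x₀ r := by
    rw [mem_sphere, dist_lineMap_left, Real.norm_of_nonneg (by positivity),
      div_mul_cancel₀ _ hd.ne']
  exact (hsphere y hy_sphere).not_ge
    ((hf.le_max_of_mem_segment hx₀ hx hy_seg).trans (max_le le_rfl hfx))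

theorem continuous_of_isMinOn_of_strictConvexOn {X E : Type*} [TopologicalSpace X]
    [NormedAddCommGroup E] [NormedSpace ℝ E] [ProperSpace E] {A : Set E} (hA : IsOpen A)
    {g : X → E → ℝ} (hg : ∀ σ, StrictConvexOn ℝ A (g σ))
    (hgc : ContinuousOn (Function.uncurry g) (univ ×ˢ A)) {Λ : X → E}
    (hΛA : ∀ σ, Λ σ ∈ A) (hΛ : ∀ σ, IsMinOn (g σ) A (Λ σ)) : Continuous Λ := by
  refine continuous_iff_continuousAt.2 fun σ₀ ↦ Metric.tendsto_nhds.2 fun ε hε ↦ ?_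
  obtain ⟨r, hr, hrA⟩ := nhds_basis_closedBall.mem_iff.1 (hA.mem_nhds (hΛA σ₀))
  set x₀ := Λ σ₀
  set ρ := min r ε
  have hρ : 0 < ρ := lt_min hr hε
  have hsphereA : sphere x₀ ρ ⊆ A :=
    sphere_subset_closedBall.trans ((closedBall_subset_closedBall (min_le_left r ε)).trans hrA)
  have hgc_at : ∀ σ, ∀ x ∈ A, ContinuousAt (Function.uncurry g) (σ, x) := fun σ x hx ↦
    hgc.continuousAt ((isOpen_univ.prod hA).mem_nhds ⟨trivial, hx⟩)
  have hgap : ∀ᶠ σ in 𝓝 σ₀, ∀ y ∈ sphere x₀ ρ, g σ x₀ < g σ y := by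
    refine (isCompact_sphere x₀ ρ).eventually_forall_of_forall_eventually fun y hy ↦ ?_
    have hyx₀ : y ≠ x₀ := ne_of_mem_sphere hy hρ.ne'
    refine ContinuousAt.eventually_lt (f := fun z : X × E ↦ g z.1 x₀)
      (g := fun z : X × E ↦ g z.1 z.2) ?_ (hgc_at σ₀ y (hsphereA hy))
      ((hg σ₀).lt_of_isMinOn_s4 (hΛ σ₀) (hΛA σ₀) (hsphereA hy) hyx₀)
    exact (hgc_at σ₀ x₀ (hΛA σ₀)).comp (f := fun z : X × E ↦ (z.1, x₀)) (x := (σ₀, y))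
      (by fun_prop)
  filter_upwards [hgap] with σ hσ
  exact ((hg σ).convexOn.dist_lt_of_lt_on_sphere hρ (hΛA σ₀) (hΛA σ) hσ
    (hΛ σ (hΛA σ₀))).trans_le (min_le_right r ε)

theorem stmt_4_general {V W : Type*} [NormedAddCommGroup V] [InnerProductSpace ℝ V]
    [FiniteDimensional ℝ V] [NormedAddCommGroup W] [InnerProductSpace ℝ W]
    [FiniteDimensional ℝ W] {A : Set V} (hA : IsOpen A)
    {f : V → ℝ} (hf : StrictConvexOn ℝ A f) (L : W →ₗ[ℝ] V)
    (Λ : W → V) (hΛ : ∀ σ : W, Λ σ ∈ A ∧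
      ∀ x ∈ A, f (Λ σ) + ⟪Λ σ, L σ⟫ ≤ f x + ⟪x, L σ⟫) :
    Continuous Λ := by
  have hJ : ∀ σ, StrictConvexOn ℝ A (fun x ↦ f x + ⟪x, L σ⟫) := fun σ ↦
    hf.add_convexOn (by simpa [real_inner_comm] using (innerₛₗ ℝ (L σ)).convexOn hf.1)
  have hJc : ContinuousOn (fun p : W × V ↦ f p.2 + ⟪p.2, L p.1⟫) (univ ×ˢ A) :=
    ((hf.convexOn.continuousOn hA).comp continuousOn_snd fun _ hp ↦ hp.2).add
      (continuous_snd.inner (L.continuous_of_finiteDimensional.comp continuous_fst)).continuousOn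
  exact continuous_of_isMinOn_of_strictConvexOn hA hJ hJc (fun σ ↦ (hΛ σ).1) fun σ ↦ (hΛ σ).2

theorem stmt_4 {V W : Type*} [NormedAddCommGroup V] [InnerProductSpace ℝ V]
    [FiniteDimensional ℝ V] [NormedAddCommGroup W] [InnerProductSpace ℝ W]
    [FiniteDimensional ℝ W] {A : Set V} (hA : IsOpen A) (hAconv : Convex ℝ A)
    {f : V → ℝ} (hf : StrictConvexOn ℝ A f) (L : W →ₗ[ℝ] V)
    (Λ : W → V) (hΛ : ∀ σ : W, Λ σ ∈ A ∧
      ∀ x ∈ A, f (Λ σ) + ⟪Λ σ, L σ⟫ ≤ f x + ⟪x, L σ⟫) :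
    Continuous Λ :=
  stmt_4_general hA hf L Λ hΛ
end

section
/- Let Γ : C(𝕋; H(m)) → H(n) be the linear operator Γ(Φ) = (1/2π)∫₀^{2π} G(e^{iθ}) Φ(e^{iθ}) G(e^{iθ})* dθ, where G(z) = (zI − A)⁻¹B. Then a Hermitian matrix X ∈ H(n) is orthogonal to the range of Γ (with respect to the trace inner product) if and only if G(e^{iθ})* X G(e^{iθ}) = 0 for all θ ∈ [0, 2π]. -/
/-!
By cyclicity of the trace, `tr (Γ(Φ) X) = (1/2π) ∫ tr (Φ · G* X G) dθ`, which gives the "if"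
direction at once. Conversely, since `X` is Hermitian, `M = G* X G` is itself an admissible test
function, and testing against it makes the integrand `tr (M* M)`, the squared Frobenius norm of
`M`: a continuous, nonnegative, periodic function with zero integral, hence identically zero.
-/

open Matrix MeasureTheory

/-- Transfer function G(e^{iθ}) = (e^{iθ}I − A)⁻¹ B. -/
noncomputable def Gtf {n m : ℕ} (A : Matrix (Fin n) (Fin n) ℂ)
    (B : Matrix (Fin n) (Fin m) ℂ) (θ : ℝ) : Matrix (Fin n) (Fin m) ℂ :=
  (Complex.exp (θ * Complex.I) • (1 : Matrix (Fin n) (Fin n) ℂ) - A)⁻¹ * B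

/-- Γ(Φ) = (1/2π) ∫₀^{2π} G Φ G* dθ, computed entrywise. -/
noncomputable def GammaOp {n m : ℕ} (A : Matrix (Fin n) (Fin n) ℂ)
    (B : Matrix (Fin n) (Fin m) ℂ) (Φ : ℝ → Matrix (Fin m) (Fin m) ℂ) :
    Matrix (Fin n) (Fin n) ℂ := fun i j =>
  (∫ θ in (0:ℝ)..(2 * Real.pi), ((Gtf A B θ) * (Φ θ) * (Gtf A B θ)ᴴ) i j) /
    (2 * Real.pi)

theorem det_smul_one_sub_ne_zero_of_one_le_norm {ι : Type*} [Fintype ι] [DecidableEq ι]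
    {A : Matrix ι ι ℂ} (hstab : ∀ z : ℂ, (A - z • (1 : Matrix ι ι ℂ)).det = 0 → ‖z‖ < 1)
    {z : ℂ} (hz : 1 ≤ ‖z‖) : (z • (1 : Matrix ι ι ℂ) - A).det ≠ 0 := by
  intro h
  refine (hz.trans_lt (hstab z ?_)).false
  rw [← neg_sub, det_neg, h, mul_zero]

theorem continuous_Gtf {n m : ℕ} {A : Matrix (Fin n) (Fin n) ℂ} (B : Matrix (Fin n) (Fin m) ℂ)
    (hstab : ∀ z : ℂ, (A - z • (1 : Matrix (Fin n) (Fin n) ℂ)).det = 0 → ‖z‖ < 1) :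
    Continuous (Gtf A B) := by
  have hres : Continuous fun θ : ℝ =>
      Complex.exp (θ * Complex.I) • (1 : Matrix (Fin n) (Fin n) ℂ) - A := by
    fun_prop
  refine Continuous.matrix_mul ?_ continuous_const
  simp_rw [inv_def, Ring.inverse_eq_inv']
  refine (hres.matrix_det.inv₀ fun θ => ?_).smul hres.matrix_adjugate
  exact det_smul_one_sub_ne_zero_of_one_le_norm hstab (by simp [Complex.norm_exp])

theorem periodic_Gtf {n m : ℕ} (A : Matrix (Fin n) (Fin n) ℂ) (B : Matrix (Fin n) (Fin m) ℂ) :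
    Function.Periodic (Gtf A B) (2 * Real.pi) := by
  intro θ
  simp only [Gtf, Complex.ofReal_add, add_mul, Complex.exp_add, Complex.ofReal_mul,
    Complex.ofReal_ofNat, Complex.exp_two_pi_mul_I, mul_one]

theorem trace_of_integral_mul {ι κ : Type*} [Fintype ι] [Fintype κ] {a b : ℝ}
    {F : ℝ → Matrix ι κ ℂ} (hF : Continuous F) (X : Matrix κ ι ℂ) :
    (of (fun i j => ∫ θ in a..b, F θ i j) * X).trace = ∫ θ in a..b, (F θ * X).trace := by
  have hcont : ∀ i j, Continuous fun θ => F θ i j * X j i := fun i j =>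
    (hF.matrix_elem i j).mul continuous_const
  simp only [trace, diag, mul_apply, of_apply]
  rw [intervalIntegral.integral_finsetSum (f := fun i θ => ∑ j, F θ i j * X j i)
    fun i _ => (continuous_finsetSum _ fun j _ => hcont i j).intervalIntegrable a b]
  refine Finset.sum_congr rfl fun i _ => ?_
  rw [intervalIntegral.integral_finsetSum (f := fun j θ => F θ i j * X j i)
    fun j _ => (hcont i j).intervalIntegrable a b]
  simp only [intervalIntegral.integral_mul_const]

theorem trace_GammaOp_mul {n m : ℕ} {A : Matrix (Fin n) (Fin n) ℂ} (B : Matrix (Fin n) (Fin m) ℂ)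
    (hstab : ∀ z : ℂ, (A - z • (1 : Matrix (Fin n) (Fin n) ℂ)).det = 0 → ‖z‖ < 1)
    {Φ : ℝ → Matrix (Fin m) (Fin m) ℂ} (hΦ : Continuous Φ) (X : Matrix (Fin n) (Fin n) ℂ) :
    (GammaOp A B Φ * X).trace = (∫ θ in (0 : ℝ)..(2 * Real.pi),
      (Φ θ * ((Gtf A B θ)ᴴ * X * Gtf A B θ)).trace) / (2 * Real.pi) := by
  have hG := continuous_Gtf B hstab
  have hGamma : GammaOp A B Φ = (2 * Real.pi : ℂ)⁻¹ •
      of fun i j => ∫ θ in (0 : ℝ)..(2 * Real.pi), (Gtf A B θ * Φ θ * (Gtf A B θ)ᴴ) i j := by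
    ext i j
    simp [GammaOp, div_eq_inv_mul]
  rw [hGamma, smul_mul, trace_smul, trace_of_integral_mul (by fun_prop) X, smul_eq_mul,
    inv_mul_eq_div]
  congr 2 with θ
  rw [Matrix.mul_assoc, trace_mul_comm, ← Matrix.mul_assoc, ← Matrix.mul_assoc, trace_mul_comm]
  simp only [Matrix.mul_assoc]

theorem Function.Periodic.eq_zero_of_integral_eq_zero {g : ℝ → ℝ} {T : ℝ} (hT : 0 < T)
    (hper : Function.Periodic g T) (hg : Continuous g) (hg_nonneg : 0 ≤ g)
    (hint : ∫ θ in (0 : ℝ)..T, g θ = 0) : g = 0 := by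
  have hae : g =ᵐ[volume.restrict (Set.Ioc 0 T)] 0 :=
    (intervalIntegral.integral_eq_zero_iff_of_le_of_nonneg_ae hT.le
      (.of_forall hg_nonneg) (hg.intervalIntegrable 0 T)).mp hint
  have hIoc : Set.EqOn g 0 (Set.Ioc 0 T) :=
    Measure.eqOn_Ioc_of_ae_eq volume hae hg.continuousOn continuousOn_const
  funext θ
  obtain ⟨y, hy, hθy⟩ := hper.exists_mem_Ioc hT θ 0
  rw [hθy]
  exact hIoc (by simpa using hy)

open ComplexOrder in
theorem eq_zero_of_integral_trace_conjTranspose_mul_self_eq_zero {ι κ : Type*} [Fintype ι]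
    [Fintype κ] {M : ℝ → Matrix ι κ ℂ} {T : ℝ} (hT : 0 < T) (hper : Function.Periodic M T)
    (hM : Continuous M) (hint : ∫ θ in (0 : ℝ)..T, ((M θ)ᴴ * M θ).trace = 0) : M = 0 := by
  have hnonneg : ∀ θ, 0 ≤ ((M θ)ᴴ * M θ).trace := fun θ =>
    (posSemidef_conjTranspose_mul_self (M θ)).trace_nonneg
  set g : ℝ → ℝ := fun θ => ((M θ)ᴴ * M θ).trace.re
  have hg : ∀ θ, ((M θ)ᴴ * M θ).trace = g θ := fun θ =>
    Complex.eq_re_of_ofReal_le (Complex.ofReal_zero ▸ hnonneg θ)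
  have hg_zero : g = 0 := by
    refine Function.Periodic.eq_zero_of_integral_eq_zero hT (fun θ => by simp [g, hper θ])
      (by fun_prop) (fun θ => ?_) ?_
    · simpa using (Complex.le_def.mp (hnonneg θ)).1
    · simp_rw [hg, intervalIntegral.integral_ofReal] at hint
      exact_mod_cast hint
  funext θ
  rw [Pi.zero_apply, ← trace_conjTranspose_mul_self_eq_zero_iff, hg, hg_zero]
  simp

theorem stmt_6_general {n m : ℕ} (A : Matrix (Fin n) (Fin n) ℂ) (B : Matrix (Fin n) (Fin m) ℂ)
    (hstab : ∀ z : ℂ, (A - z • (1 : Matrix (Fin n) (Fin n) ℂ)).det = 0 → ‖z‖ < 1)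
    (X : Matrix (Fin n) (Fin n) ℂ) (hX : X.IsHermitian) :
    (∀ Φ : ℝ → Matrix (Fin m) (Fin m) ℂ, Continuous Φ →
        Function.Periodic Φ (2 * Real.pi) → (∀ θ, (Φ θ).IsHermitian) →
        ((GammaOp A B Φ) * X).trace = 0) ↔
      (∀ θ : ℝ, (Gtf A B θ)ᴴ * X * Gtf A B θ = 0) := by
  have hG := continuous_Gtf B hstab
  constructor
  · intro hperp
    set M : ℝ → Matrix (Fin m) (Fin m) ℂ := fun θ => (Gtf A B θ)ᴴ * X * Gtf A B θ
    have hM : Continuous M := by fun_prop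
    have hM_per : Function.Periodic M (2 * Real.pi) := fun θ => by
      simp only [M, periodic_Gtf A B θ]
    have hM_herm : ∀ θ, (M θ).IsHermitian := fun θ => by
      simp [M, IsHermitian, Matrix.mul_assoc, hX.eq]
    have hint := hperp M hM hM_per hM_herm
    rw [trace_GammaOp_mul B hstab hM, div_eq_zero_iff, or_iff_left (by simp [Real.pi_ne_zero])]
      at hint
    replace hint : ∫ θ in (0 : ℝ)..(2 * Real.pi), ((M θ)ᴴ * M θ).trace = 0 := by
      simpa only [(hM_herm _).eq] using hint
    exact congrFun (eq_zero_of_integral_trace_conjTranspose_mul_self_eq_zero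
      Real.two_pi_pos hM_per hM hint)
  · intro hzero Φ hΦ _ _
    simp [trace_GammaOp_mul B hstab hΦ, hzero]

theorem stmt_6 {n m : ℕ} (A : Matrix (Fin n) (Fin n) ℂ) (B : Matrix (Fin n) (Fin m) ℂ)
    (hstab : ∀ z : ℂ, (A - z • (1 : Matrix (Fin n) (Fin n) ℂ)).det = 0 → ‖z‖ < 1)
    (hB : B.rank = m)
    (hreach : ∀ x : Fin n → ℂ, (∀ k : ℕ, Matrix.vecMul x (A ^ k * B) = 0) → x = 0)
    (X : Matrix (Fin n) (Fin n) ℂ) (hX : X.IsHermitian) :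
    (∀ Φ : ℝ → Matrix (Fin m) (Fin m) ℂ, Continuous Φ →
        Function.Periodic Φ (2 * Real.pi) → (∀ θ, (Φ θ).IsHermitian) →
        ((GammaOp A B Φ) * X).trace = 0) ↔
      (∀ θ : ℝ, (Gtf A B θ)ᴴ * X * Gtf A B θ = 0) :=
  stmt_6_general A B hstab X hX
end

section
/- The functional J^H_Ψ(Λ) = tr ∫ (I + G*ΛG)⁻¹ Ψ + tr(ΛΣ) is strictly convex on the set L^H_Γ = {Λ ∈ H(n) ∩ Range Γ : I + G(e^{iθ})*ΛG(e^{iθ}) > 0 for all θ}. -/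
/-!
For each `θ`, `M ↦ re tr (M⁻¹ Ψ(θ))` is strictly convex on positive definite matrices: the
inverse is operator convex, the gap `a M₁⁻¹ + b M₂⁻¹ - (a M₁ + b M₂)⁻¹` is nonzero when
`M₁ ≠ M₂`, and `Ψ ≥ c I` with `c > 0` turns a nonzero positive semidefinite gap into a positive
trace. Composing with the affine map `Λ ↦ I + G*ΛG` makes the integrand of `J` convex in `Λ`,
strictly at every `θ` with `G*Λ₁G ≠ G*Λ₂G`. That set is open and periodic, and nonempty when
`Λ₁ ≠ Λ₂`: otherwise `Δ = Λ₁ - Λ₂` would satisfy `tr (Δ Γ(Φ)) = ∫ tr (G*ΔG Φ) = 0` for every `Φ`,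
hence `tr (Δ²) = 0` since `Δ ∈ Range Γ`. So the strict inequality holds on a set of positive
measure, and the remaining term `tr (ΛΣ)` is linear.
-/

open Matrix MeasureTheory
open scoped ComplexOrder

/-- Range of Γ, as a set of Hermitian matrices. -/
def RangeGamma {n m : ℕ} (A : Matrix (Fin n) (Fin n) ℂ)
    (B : Matrix (Fin n) (Fin m) ℂ) : Set (Matrix (Fin n) (Fin n) ℂ) :=
  {X | ∃ Φ : ℝ → Matrix (Fin m) (Fin m) ℂ, Continuous Φ ∧
    Function.Periodic Φ (2 * Real.pi) ∧ (∀ θ, (Φ θ).IsHermitian) ∧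
    GammaOp A B Φ = X}

/-- Normalized Lebesgue measure dθ/2π on one period, modeling the unit circle. -/
noncomputable def muT : Measure ℝ :=
  (ENNReal.ofReal (2 * Real.pi)⁻¹) • (volume.restrict (Set.Ioc 0 (2 * Real.pi)))

/-- Bounded coercive Hermitian-valued spectral density on the circle. -/
def IsSpecDens {m : ℕ} (Φ : ℝ → Matrix (Fin m) (Fin m) ℂ) : Prop :=
  (∀ i j, Measurable fun θ => Φ θ i j) ∧ Function.Periodic Φ (2 * Real.pi) ∧
  (∀ θ, (Φ θ).IsHermitian) ∧ (∃ C : ℝ, ∀ θ i j, ‖Φ θ i j‖ ≤ C) ∧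
  (∃ c : ℝ, 0 < c ∧ ∀ θ, ((Φ θ) - c • (1 : Matrix (Fin m) (Fin m) ℂ)).PosSemidef)

/-- The set L^H_Γ = {Λ Hermitian, Λ ∈ Range Γ, I + G*ΛG > 0 on 𝕋}. -/
def LHGamma {n m : ℕ} (A : Matrix (Fin n) (Fin n) ℂ)
    (B : Matrix (Fin n) (Fin m) ℂ) : Set (Matrix (Fin n) (Fin n) ℂ) :=
  {Λ | Λ.IsHermitian ∧ Λ ∈ RangeGamma A B ∧
    ∀ θ : ℝ, ((1 : Matrix (Fin m) (Fin m) ℂ) + (Gtf A B θ)ᴴ * Λ * Gtf A B θ).PosDef}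

/-- The dual functional J^H_Ψ(Λ) = tr ∫ (I + G*ΛG)⁻¹Ψ + tr(ΛΣ). -/
noncomputable def JH {n m : ℕ} (A : Matrix (Fin n) (Fin n) ℂ)
    (B : Matrix (Fin n) (Fin m) ℂ) (Ψ : ℝ → Matrix (Fin m) (Fin m) ℂ)
    (Sig : Matrix (Fin n) (Fin n) ℂ) (Λ : Matrix (Fin n) (Fin n) ℂ) : ℝ :=
  (∫ θ, ((((1 : Matrix (Fin m) (Fin m) ℂ) + (Gtf A B θ)ᴴ * Λ * Gtf A B θ)⁻¹ *
      Ψ θ).trace.re) ∂muT) + (Λ * Sig).trace.re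

namespace Matrix

variable {ι : Type*}

lemma convex_setOf_posDef : Convex ℝ {M : Matrix ι ι ℂ | M.PosDef} := by
  intro M₁ h₁ M₂ h₂ a b ha hb hab
  rcases ha.eq_or_lt with rfl | ha
  · simpa [show b = 1 by linarith] using h₂
  · exact (h₁.smul ha).add_posSemidef (h₂.posSemidef.smul hb)

variable [Fintype ι] [DecidableEq ι]

open scoped MatrixOrder in
lemma PosSemidef.trace_mul_nonneg {S P : Matrix ι ι ℂ} (hS : S.PosSemidef) (hP : P.PosSemidef) :
    0 ≤ (S * P).trace := by
  obtain ⟨C, rfl⟩ := CStarAlgebra.nonneg_iff_eq_star_mul_self.mp hS.nonneg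
  rw [star_eq_conjTranspose, Matrix.mul_assoc, trace_mul_comm]
  exact (hP.mul_mul_conjTranspose_same C).trace_nonneg

lemma PosSemidef.re_trace_mul_pos {S P : Matrix ι ι ℂ} (hS : S.PosSemidef) (hS0 : S ≠ 0)
    {c : ℝ} (hc : 0 < c) (hP : (P - c • 1).PosSemidef) : 0 < (S * P).trace.re := by
  have hsplit : S * P = S * (P - c • 1) + c • S := by
    rw [Matrix.mul_sub, Matrix.mul_smul, Matrix.mul_one, sub_add_cancel]
  have hSP : 0 ≤ (S * (P - c • 1)).trace.re :=
    (Complex.nonneg_iff.mp (hS.trace_mul_nonneg hP)).1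
  have hS : 0 < S.trace.re :=
    (Complex.pos_iff.mp (hS.trace_nonneg.lt_of_ne' (mt hS.trace_eq_zero_iff.mp hS0))).1
  rw [hsplit, trace_add, trace_smul, Complex.add_re, Complex.smul_re, smul_eq_mul]
  positivity

lemma PosDef.posSemidef_fromBlocks_one_inv {M : Matrix ι ι ℂ} (hM : M.PosDef) :
    (fromBlocks M 1 1 M⁻¹).PosSemidef := by
  have := hM.isUnit.invertible
  simpa using (PosDef.fromBlocks₁₁ (1 : Matrix ι ι ℂ) M⁻¹ hM).mpr (by simpa using .zero)

open scoped MatrixOrder in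
/-- Operator convexity of the matrix inverse, via Schur complements of `[M 1; 1 M⁻¹] ≥ 0`. -/
theorem PosDef.inv_smul_add_smul_le {M₁ M₂ : Matrix ι ι ℂ} (h₁ : M₁.PosDef) (h₂ : M₂.PosDef)
    {a b : ℝ} (ha : 0 ≤ a) (hb : 0 ≤ b) (hab : a + b = 1) :
    (a • M₁ + b • M₂)⁻¹ ≤ a • M₁⁻¹ + b • M₂⁻¹ := by
  have hM : (a • M₁ + b • M₂).PosDef := convex_setOf_posDef h₁ h₂ ha hb hab
  have := hM.isUnit.invertible
  have hblocks : a • fromBlocks M₁ 1 1 M₁⁻¹ + b • fromBlocks M₂ 1 1 M₂⁻¹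
      = fromBlocks (a • M₁ + b • M₂) 1 1 (a • M₁⁻¹ + b • M₂⁻¹) := by
    simp only [fromBlocks_smul, fromBlocks_add, ← add_smul, hab, one_smul]
  have hpsd := (h₁.posSemidef_fromBlocks_one_inv.smul ha).add
    (h₂.posSemidef_fromBlocks_one_inv.smul hb)
  rw [hblocks] at hpsd
  simpa [le_iff] using (PosDef.fromBlocks₁₁ (1 : Matrix ι ι ℂ) _ hM).mp (by simpa using hpsd)

omit [DecidableEq ι] in
lemma PosDef.eq_zero_of_mul_mul_eq_zero {P D : Matrix ι ι ℂ} (hP : P.PosDef)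
    (hD : D.IsHermitian) (h : D * P * D = 0) : D = 0 := by
  refine mulVec_injective (funext fun x => ?_)
  rw [zero_mulVec]
  by_contra hx
  have := hP.dotProduct_mulVec_pos hx
  rw [star_mulVec, hD.eq, ← dotProduct_mulVec, mulVec_mulVec, mulVec_mulVec, h,
    zero_mulVec, dotProduct_zero] at this
  exact this.false

theorem PosDef.inv_smul_add_smul_ne {M₁ M₂ : Matrix ι ι ℂ} (h₁ : M₁.PosDef) (h₂ : M₂.PosDef)
    (hne : M₁ ≠ M₂) {a b : ℝ} (ha : 0 < a) (hb : 0 < b) (hab : a + b = 1) :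
    (a • M₁ + b • M₂)⁻¹ ≠ a • M₁⁻¹ + b • M₂⁻¹ := by
  intro h
  have hM : (a • M₁ + b • M₂).PosDef := convex_setOf_posDef h₁ h₂ ha.le hb.le hab
  have hd₁ := (isUnit_iff_isUnit_det _).mp h₁.isUnit
  have hd₂ := (isUnit_iff_isUnit_det _).mp h₂.isUnit
  have hinv : (a • M₁⁻¹ + b • M₂⁻¹) * (a • M₁ + b • M₂) = 1 :=
    h ▸ nonsing_inv_mul _ ((isUnit_iff_isUnit_det _).mp hM.isUnit)
  -- `M₁ ((a M₁⁻¹ + b M₂⁻¹)(a M₁ + b M₂) - 1) = a b (M₂ - M₁) M₂⁻¹ (M₂ - M₁)`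
  have hkey : (a * b) • ((M₂ - M₁) * M₂⁻¹ * (M₂ - M₁)) = 0 := by
    obtain rfl : b = 1 - a := by linarith
    have := congrArg (M₁ * ·) (sub_eq_zero.mpr hinv)
    simp only [Matrix.mul_zero] at this
    rw [← this]
    simp only [Matrix.mul_sub, Matrix.sub_mul, Matrix.mul_add, Matrix.add_mul, Matrix.mul_smul,
      Matrix.smul_mul, ← Matrix.mul_assoc, mul_nonsing_inv _ hd₁, mul_nonsing_inv _ hd₂,
      Matrix.one_mul, Matrix.mul_one, nonsing_inv_mul_cancel_right _ _ hd₂]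
    module
  have hD := h₂.inv.eq_zero_of_mul_mul_eq_zero (h₂.1.sub h₁.1)
    ((smul_eq_zero_iff_right (by positivity)).mp hkey)
  exact hne (sub_eq_zero.mp hD).symm

open scoped MatrixOrder in
theorem strictConvexOn_re_trace_inv_mul {P : Matrix ι ι ℂ} {c : ℝ} (hc : 0 < c)
    (hP : (P - c • 1).PosSemidef) :
    StrictConvexOn ℝ {M : Matrix ι ι ℂ | M.PosDef} fun M => (M⁻¹ * P).trace.re := by
  refine ⟨convex_setOf_posDef, fun M₁ h₁ M₂ h₂ hne a b ha hb hab => ?_⟩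
  have hgap : (a • M₁⁻¹ + b • M₂⁻¹ - (a • M₁ + b • M₂)⁻¹).PosSemidef :=
    le_iff.mp (h₁.inv_smul_add_smul_le h₂ ha.le hb.le hab)
  have hpos := hgap.re_trace_mul_pos
    (sub_ne_zero.mpr (h₁.inv_smul_add_smul_ne h₂ hne ha hb hab).symm) hc hP
  simp only [Matrix.sub_mul, Matrix.add_mul, Matrix.smul_mul, trace_sub, trace_add, trace_smul,
    Complex.sub_re, Complex.add_re, Complex.smul_re, smul_eq_mul] at hpos
  simp only [smul_eq_mul]
  linarith

end Matrix

lemma Continuous.matrix_inv {X ι : Type*} [TopologicalSpace X] [Fintype ι] [DecidableEq ι]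
    {P : X → Matrix ι ι ℂ} (hP : Continuous P) (hdet : ∀ x, (P x).det ≠ 0) :
    Continuous fun x => (P x)⁻¹ :=
  continuous_iff_continuousAt.2 fun x => (continuousAt_matrix_inv _ (by
    rw [Ring.inverse_eq_inv']; exact continuousAt_inv₀ (hdet x))).comp hP.continuousAt

lemma one_add_conjTranspose_mul_smul_add_smul_mul {ι κ : Type*} [Fintype ι] [Fintype κ]
    [DecidableEq κ] (G : Matrix ι κ ℂ) (X Y : Matrix ι ι ℂ) {a b : ℝ} (hab : a + b = 1) :
    1 + Gᴴ * (a • X + b • Y) * G = a • (1 + Gᴴ * X * G) + b • (1 + Gᴴ * Y * G) := by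
  obtain rfl : b = 1 - a := by linarith
  simp only [Matrix.mul_add, Matrix.add_mul, Matrix.mul_smul, Matrix.smul_mul]
  module

lemma convexOn_re_trace_mul {ι : Type*} [Fintype ι] (S : Matrix ι ι ℂ) {s : Set (Matrix ι ι ℂ)}
    (hs : Convex ℝ s) : ConvexOn ℝ s fun X => (X * S).trace.re :=
  LinearMap.convexOn
    { toFun := fun X => (X * S).trace.re
      map_add' := fun X Y => by simp [Matrix.add_mul]
      map_smul' := fun a X => by simp } hs

section Integral

variable {α : Type*} [MeasurableSpace α] {μ : Measure α}

theorem integral_lt_integral_of_ae_le_of_measure_setOf_lt_ne_zero {f g : α → ℝ}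
    (hf : Integrable f μ) (hg : Integrable g μ) (hle : f ≤ᵐ[μ] g)
    (hlt : μ {x | f x < g x} ≠ 0) : ∫ x, f x ∂μ < ∫ x, g x ∂μ := by
  rw [← sub_pos, ← integral_sub hg hf, integral_pos_iff_support_of_nonneg_ae
    (hle.mono fun x => sub_nonneg.2) (hg.sub hf)]
  exact pos_iff_ne_zero.2 (mt (measure_mono_null fun x hx => (sub_pos.2 hx).ne') hlt)

theorem strictConvexOn_integral {E : Type*} [AddCommMonoid E] [Module ℝ E] {s : Set E}
    {f : E → α → ℝ} (hs : Convex ℝ s) (hint : ∀ x ∈ s, Integrable (f x) μ)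
    (hconv : ∀ ω, ConvexOn ℝ s (f · ω))
    (hstrict : ∀ x ∈ s, ∀ y ∈ s, x ≠ y → ∀ a b : ℝ, 0 < a → 0 < b → a + b = 1 →
      μ {ω | f (a • x + b • y) ω < a * f x ω + b * f y ω} ≠ 0) :
    StrictConvexOn ℝ s fun x => ∫ ω, f x ω ∂μ := by
  refine ⟨hs, fun x hx y hy hxy a b ha hb hab => ?_⟩
  have hcomb : Integrable (fun ω => a * f x ω + b * f y ω) μ :=
    ((hint x hx).const_mul a).add ((hint y hy).const_mul b)
  have hlt := integral_lt_integral_of_ae_le_of_measure_setOf_lt_ne_zero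
    (hint _ (hs hx hy ha.le hb.le hab)) hcomb
    (ae_of_all _ fun ω => (hconv ω).2 hx hy ha.le hb.le hab) (hstrict x hx y hy hxy a b ha hb hab)
  rwa [integral_add ((hint x hx).const_mul a) ((hint y hy).const_mul b), integral_const_mul,
    integral_const_mul] at hlt

end Integral

lemma muT_setOf_ne_ne_zero {X : Type*} [TopologicalSpace X] [T2Space X] {f g : ℝ → X}
    (hf : Continuous f) (hg : Continuous g) (hfp : Function.Periodic f (2 * Real.pi))
    (hgp : Function.Periodic g (2 * Real.pi)) (hne : f ≠ g) :
    muT {θ | f θ ≠ g θ} ≠ 0 := by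
  obtain ⟨θ₀, hθ₀⟩ := Function.ne_iff.mp hne
  have hper : Function.Periodic (fun θ => f θ ≠ g θ) (2 * Real.pi) := fun θ => by
    simp only [hfp θ, hgp θ]
  obtain ⟨y, hy, hfy⟩ := hper.exists_mem_Ioc Real.two_pi_pos θ₀ 0
  rw [zero_add] at hy
  have hU : {θ | f θ ≠ g θ} ∈ nhdsWithin y (Set.Iio y) :=
    mem_nhdsWithin_of_mem_nhds ((isOpen_ne_fun hf hg).mem_nhds (show f y ≠ g y from hfy ▸ hθ₀))
  obtain ⟨l, hl, hlU⟩ := mem_nhdsLT_iff_exists_Ioo_subset.mp hU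
  have hIoo : Set.Ioo (max l 0) y ⊆ {θ | f θ ≠ g θ} ∩ Set.Ioc 0 (2 * Real.pi) := fun θ hθ =>
    ⟨hlU ⟨(le_max_left _ _).trans_lt hθ.1, hθ.2⟩,
      (le_max_right _ _).trans_lt hθ.1, hθ.2.le.trans hy.2⟩
  rw [muT, Measure.smul_apply, Measure.restrict_apply' measurableSet_Ioc, smul_eq_mul]
  refine mul_ne_zero (by simp [Real.pi_pos]) (ne_of_gt ?_)
  exact ((Measure.measure_Ioo_pos volume).mpr (max_lt hl hy.1)).trans_le (measure_mono hIoo)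

lemma integrable_re_trace_mul_muT {ι : Type*} [Fintype ι] {P Ψ : ℝ → Matrix ι ι ℂ}
    (hP : Continuous P) (hΨ : ∀ i j, Measurable fun θ => Ψ θ i j) {C : ℝ}
    (hC : ∀ θ i j, ‖Ψ θ i j‖ ≤ C) : Integrable (fun θ => (P θ * Ψ θ).trace.re) muT := by
  refine Integrable.re (𝕜 := ℂ) (Integrable.smul_measure ?_ ENNReal.ofReal_ne_top)
  simp only [trace, diag, mul_apply]
  refine integrable_finsetSum _ fun i _ => integrable_finsetSum _ fun j _ => ?_
  exact (((continuous_apply j).comp ((continuous_apply i).comp hP)).integrableOn_Ioc).mul_bdd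
    (hΨ j i).aestronglyMeasurable (ae_of_all _ (hC · j i))

section TransferFunction

variable {n m : ℕ} {A : Matrix (Fin n) (Fin n) ℂ} {B : Matrix (Fin n) (Fin m) ℂ}

lemma det_exp_smul_one_sub_ne_zero
    (hstab : ∀ z : ℂ, (A - z • (1 : Matrix (Fin n) (Fin n) ℂ)).det = 0 → ‖z‖ < 1) (θ : ℝ) :
    (Complex.exp (θ * Complex.I) • (1 : Matrix (Fin n) (Fin n) ℂ) - A).det ≠ 0 := by
  intro h
  have := hstab _ (by rw [← neg_sub, det_neg, h, mul_zero])
  simp [Complex.norm_exp_ofReal_mul_I] at this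

lemma continuous_gtf
    (hstab : ∀ z : ℂ, (A - z • (1 : Matrix (Fin n) (Fin n) ℂ)).det = 0 → ‖z‖ < 1) :
    Continuous (Gtf A B) :=
  (Continuous.matrix_inv (by fun_prop) (det_exp_smul_one_sub_ne_zero hstab)).matrix_mul
    continuous_const

lemma periodic_gtf : Function.Periodic (Gtf A B) (2 * Real.pi) := fun θ => by
  simp only [Gtf]
  push_cast
  rw [add_mul, Complex.exp_add, Complex.exp_two_pi_mul_I, mul_one]

lemma continuous_gtf_mul_mul_conjTranspose (hG : Continuous (Gtf A B))
    {Φ : ℝ → Matrix (Fin m) (Fin m) ℂ} (hΦ : Continuous Φ) :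
    Continuous fun θ => Gtf A B θ * Φ θ * (Gtf A B θ)ᴴ :=
  (hG.matrix_mul hΦ).matrix_mul hG.matrix_conjTranspose

lemma gammaOp_smul_add_smul (hG : Continuous (Gtf A B)) {Φ₁ Φ₂ : ℝ → Matrix (Fin m) (Fin m) ℂ}
    (hΦ₁ : Continuous Φ₁) (hΦ₂ : Continuous Φ₂) (a b : ℝ) :
    GammaOp A B (fun θ => a • Φ₁ θ + b • Φ₂ θ) = a • GammaOp A B Φ₁ + b • GammaOp A B Φ₂ := by
  ext i j
  have hint : ∀ (r : ℝ) {Φ : ℝ → Matrix (Fin m) (Fin m) ℂ}, Continuous Φ → IntervalIntegrable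
      (fun θ => r • (Gtf A B θ * Φ θ * (Gtf A B θ)ᴴ) i j) volume 0 (2 * Real.pi) :=
    fun r Φ hΦ => (((continuous_apply_apply i j).comp
      (continuous_gtf_mul_mul_conjTranspose hG hΦ)).intervalIntegrable _ _).smul r
  simp only [GammaOp, Matrix.mul_add, Matrix.add_mul, Matrix.mul_smul, Matrix.smul_mul,
    Matrix.add_apply, Matrix.smul_apply]
  rw [intervalIntegral.integral_add (hint a hΦ₁) (hint b hΦ₂),
    intervalIntegral.integral_smul, intervalIntegral.integral_smul]
  simp only [Complex.real_smul]
  ring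

lemma convex_rangeGamma (hG : Continuous (Gtf A B)) : Convex ℝ (RangeGamma A B) := by
  rintro _ ⟨Φ₁, hc₁, hp₁, hh₁, rfl⟩ _ ⟨Φ₂, hc₂, hp₂, hh₂, rfl⟩ a b - - -
  refine ⟨fun θ => a • Φ₁ θ + b • Φ₂ θ, by fun_prop, fun θ => by simp only [hp₁ θ, hp₂ θ],
    fun θ => ((hh₁ θ).smul (.all a)).add ((hh₂ θ).smul (.all b)),
    gammaOp_smul_add_smul hG hc₁ hc₂ a b⟩

lemma convex_LHGamma (hG : Continuous (Gtf A B)) : Convex ℝ (LHGamma A B) := by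
  rintro Λ₁ ⟨hH₁, hR₁, hpd₁⟩ Λ₂ ⟨hH₂, hR₂, hpd₂⟩ a b ha hb hab
  refine ⟨(hH₁.smul (.all a)).add (hH₂.smul (.all b)), convex_rangeGamma hG hR₁ hR₂ ha hb hab,
    fun θ => ?_⟩
  rw [one_add_conjTranspose_mul_smul_add_smul_mul _ _ _ hab]
  exact convex_setOf_posDef (hpd₁ θ) (hpd₂ θ) ha hb hab

lemma trace_mul_gammaOp (hG : Continuous (Gtf A B)) {Φ : ℝ → Matrix (Fin m) (Fin m) ℂ}
    (hΦ : Continuous Φ) (Δ : Matrix (Fin n) (Fin n) ℂ) :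
    (Δ * GammaOp A B Φ).trace
      = (∫ θ in (0:ℝ)..(2 * Real.pi), ((Gtf A B θ)ᴴ * Δ * Gtf A B θ * Φ θ).trace) /
          (2 * Real.pi) := by
  set F := fun θ => Gtf A B θ * Φ θ * (Gtf A B θ)ᴴ
  have hcont : ∀ i j, Continuous fun θ => Δ i j * F θ j i := fun i j =>
    continuous_const.mul ((continuous_apply_apply j i).comp
      (continuous_gtf_mul_mul_conjTranspose hG hΦ))
  have hcycle : ∀ θ, ((Gtf A B θ)ᴴ * Δ * Gtf A B θ * Φ θ).trace = ∑ i, ∑ j, Δ i j * F θ j i :=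
    fun θ => by
      rw [Matrix.mul_assoc, Matrix.mul_assoc, trace_mul_comm, Matrix.mul_assoc]
      simp only [trace, diag, mul_apply, F]
  calc (Δ * GammaOp A B Φ).trace
      = ∑ i, ∑ j, Δ i j * ((∫ θ in (0:ℝ)..(2 * Real.pi), F θ j i) / (2 * Real.pi)) := by
        simp only [trace, diag, mul_apply, GammaOp, F]
    _ = (∫ θ in (0:ℝ)..(2 * Real.pi), ∑ i, ∑ j, Δ i j * F θ j i) / (2 * Real.pi) := by
        rw [intervalIntegral.integral_finsetSum fun i _ =>
          (continuous_finsetSum _ fun j _ => hcont i j).intervalIntegrable _ _]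
        simp only [intervalIntegral.integral_finsetSum fun j _ =>
            (hcont _ j).intervalIntegrable _ _,
          intervalIntegral.integral_const_mul, Finset.sum_div, mul_div_assoc]
    _ = _ := by simp only [hcycle]

lemma eq_of_forall_conjTranspose_gtf_mul_mul_eq (hG : Continuous (Gtf A B))
    {Λ₁ Λ₂ : Matrix (Fin n) (Fin n) ℂ} (hH₁ : Λ₁.IsHermitian) (hH₂ : Λ₂.IsHermitian)
    (hR₁ : Λ₁ ∈ RangeGamma A B) (hR₂ : Λ₂ ∈ RangeGamma A B)
    (h : ∀ θ, (Gtf A B θ)ᴴ * Λ₁ * Gtf A B θ = (Gtf A B θ)ᴴ * Λ₂ * Gtf A B θ) : Λ₁ = Λ₂ := by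
  have hΔ : ∀ θ, (Gtf A B θ)ᴴ * (Λ₁ - Λ₂) * Gtf A B θ = 0 := fun θ => by
    rw [Matrix.mul_sub, Matrix.sub_mul, h, sub_self]
  have horth : ∀ X ∈ RangeGamma A B, ((Λ₁ - Λ₂) * X).trace = 0 := by
    rintro X ⟨Φ, hΦ, -, -, rfl⟩
    simp [trace_mul_gammaOp hG hΦ, hΔ]
  have hzero : ((Λ₁ - Λ₂)ᴴ * (Λ₁ - Λ₂)).trace = 0 := by
    rw [(hH₁.sub hH₂).eq, Matrix.mul_sub, trace_sub, horth _ hR₁, horth _ hR₂, sub_zero]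
  exact sub_eq_zero.mp (trace_conjTranspose_mul_self_eq_zero_iff.mp hzero)

lemma muT_setOf_conjTranspose_gtf_mul_mul_ne_ne_zero (hG : Continuous (Gtf A B))
    {Λ₁ Λ₂ : Matrix (Fin n) (Fin n) ℂ} (h₁ : Λ₁ ∈ LHGamma A B) (h₂ : Λ₂ ∈ LHGamma A B)
    (hne : Λ₁ ≠ Λ₂) :
    muT {θ | (Gtf A B θ)ᴴ * Λ₁ * Gtf A B θ ≠ (Gtf A B θ)ᴴ * Λ₂ * Gtf A B θ} ≠ 0 := by
  refine muT_setOf_ne_ne_zero (by fun_prop) (by fun_prop)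
    (fun θ => by simp only [periodic_gtf θ]) (fun θ => by simp only [periodic_gtf θ])
    fun h => hne ?_
  exact eq_of_forall_conjTranspose_gtf_mul_mul_eq hG h₁.1 h₂.1 h₁.2.1 h₂.2.1 (congrFun h)

end TransferFunction

theorem stmt_14_general {n m : ℕ} (A : Matrix (Fin n) (Fin n) ℂ) (B : Matrix (Fin n) (Fin m) ℂ)
    (hstab : ∀ z : ℂ, (A - z • (1 : Matrix (Fin n) (Fin n) ℂ)).det = 0 → ‖z‖ < 1)
    (Ψ : ℝ → Matrix (Fin m) (Fin m) ℂ) (hΨ : IsSpecDens Ψ)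
    (Sig : Matrix (Fin n) (Fin n) ℂ) :
    StrictConvexOn ℝ (LHGamma A B) (JH A B Ψ Sig) := by
  obtain ⟨hΨm, -, -, ⟨C, hC⟩, ⟨c, hc, hcoer⟩⟩ := hΨ
  have hG := continuous_gtf (B := B) hstab
  have hconv := convex_LHGamma hG
  have hφ θ := strictConvexOn_re_trace_inv_mul hc (hcoer θ)
  set f : Matrix (Fin n) (Fin n) ℂ → ℝ → ℝ := fun Λ θ =>
    (((1 : Matrix (Fin m) (Fin m) ℂ) + (Gtf A B θ)ᴴ * Λ * Gtf A B θ)⁻¹ * Ψ θ).trace.re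
  have hint : ∀ Λ ∈ LHGamma A B, Integrable (f Λ) muT := fun Λ hΛ =>
    integrable_re_trace_mul_muT
      (Continuous.matrix_inv (by fun_prop) fun θ => (hΛ.2.2 θ).det_pos.ne') hΨm hC
  have hpt : ∀ θ, ConvexOn ℝ (LHGamma A B) (f · θ) := fun θ =>
    ⟨hconv, fun Λ₁ h₁ Λ₂ h₂ a b ha hb hab => by
      simp only [f, one_add_conjTranspose_mul_smul_add_smul_mul _ _ _ hab]
      exact (hφ θ).convexOn.2 (h₁.2.2 θ) (h₂.2.2 θ) ha hb hab⟩
  have hstrict : ∀ Λ₁ ∈ LHGamma A B, ∀ Λ₂ ∈ LHGamma A B, Λ₁ ≠ Λ₂ → ∀ a b : ℝ, 0 < a → 0 < b →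
      a + b = 1 → muT {θ | f (a • Λ₁ + b • Λ₂) θ < a * f Λ₁ θ + b * f Λ₂ θ} ≠ 0 := by
    intro Λ₁ h₁ Λ₂ h₂ hne a b ha hb hab h0
    refine muT_setOf_conjTranspose_gtf_mul_mul_ne_ne_zero hG h₁ h₂ hne
      (measure_mono_null (fun θ hθ => ?_) h0)
    simp only [Set.mem_ofPred_eq, f, one_add_conjTranspose_mul_smul_add_smul_mul _ _ _ hab]
    exact (hφ θ).2 (h₁.2.2 θ) (h₂.2.2 θ) (fun h => hθ (add_left_cancel h)) ha hb hab
  exact (strictConvexOn_integral hconv hint hpt hstrict).add_convexOn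
    (convexOn_re_trace_mul Sig hconv)

theorem stmt_14 {n m : ℕ} (A : Matrix (Fin n) (Fin n) ℂ) (B : Matrix (Fin n) (Fin m) ℂ)
    (hstab : ∀ z : ℂ, (A - z • (1 : Matrix (Fin n) (Fin n) ℂ)).det = 0 → ‖z‖ < 1)
    (hB : B.rank = m)
    (hreach : ∀ x : Fin n → ℂ, (∀ k : ℕ, Matrix.vecMul x (A ^ k * B) = 0) → x = 0)
    (Ψ : ℝ → Matrix (Fin m) (Fin m) ℂ) (hΨ : IsSpecDens Ψ)
    (Sig : Matrix (Fin n) (Fin n) ℂ) (hSig : Sig.PosDef) (hSigR : Sig ∈ RangeGamma A B) :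
    StrictConvexOn ℝ (LHGamma A B) (JH A B Ψ Sig) :=
  stmt_14_general A B hstab Ψ hΨ Sig
end
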